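/- arXiv:1609.05005 — 3 statements merged into one kernel-verified Lean document; each statement's English description precedes it below -/
import Mathlib

section
/- For every n ≥ 0 there exists a map b from the set of triples (Γ₁,Γ₂,Γ₃) ⊢ [n,n+1,n+2] to the set of pairs (Y,S), where Y is a Young diagram with n+3 boxes and S is a 2-element set of removable boxes of Y, such that every fiber of b has exactly two elements, and for every such pair (Y,S) the two elements Γ, H of the fiber b⁻¹(Y,S) satisfy pos_∞(Γ) = (n+2) − ℓ(Y) and pos_∞(H) = (n+3) − ℓ(Y). Consequently ∑_{Γ⊢[n,n+1,n+2]} q^{pos_∞(Γ)} = (1+q) · ∑_{(Y,S)} q^{(n+2)−ℓ(Y)}, the latter sum running over all Young diagrams Y with n+3 boxes and all 2-element sets S of removable boxes of Y. -/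
/-!
Fix the middle diagram `Δ = Γ₂`. A removable cell of `Δ` in column `v` corresponds to the addable
column `v + 1`, so a triple is `Δ` together with addable columns `u ≥ 1` and `w`, while a pair
`(Y, S)` is `Δ = Y ∖ S` together with the addable columns `p < q` of the cells of `S`. Send `(u, w)`
to `{0, u}` if `w = 0`, to `{u, w}` if `u < w`, and to `{w⁻, u}` otherwise, where `w⁻` is the
addable column preceding `w`. The fiber over `{p, q}` consists of `(q, p⁺)`, where `p⁺` is the
addable column following `p`, and of `(q, 0)` if `p = 0`, `(p, q)` if `p > 0`. Since
`ℓ(Γ₃) = ℓ(Δ) + [w = 0]` and `ℓ(Y) = ℓ(Δ) + [p = 0]`, the two elements of a fiber have `pos_∞`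
equal to `(n+2) − ℓ(Y)` and `(n+3) − ℓ(Y)`, and summing over fibers gives the identity.
-/

open Polynomial

/-- The number of nonempty columns of a Young diagram. -/
def ell (Γ : YoungDiagram) : ℕ := (Γ.cells.filter fun c => c.2 = 0).card

/-- A triple of nested Young diagrams `(Γ₁,Γ₂,Γ₃) ⊢ [n,n+1,n+2]`, recorded together with
the (uniquely determined) added boxes `b₁ ∈ Γ₂ ∖ Γ₁` and `b₂ ∈ Γ₃ ∖ Γ₂`. -/
structure TripleFlag (n : ℕ) where
  Γ₁ : YoungDiagram
  Γ₂ : YoungDiagram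
  Γ₃ : YoungDiagram
  b₁ : ℕ × ℕ
  b₂ : ℕ × ℕ
  card₁ : Γ₁.card = n
  not_mem₁ : b₁ ∉ Γ₁
  cells₂ : Γ₂.cells = insert b₁ Γ₁.cells
  not_mem₂ : b₂ ∉ Γ₂
  cells₃ : Γ₃.cells = insert b₂ Γ₂.cells

/-- `pos_∞` of a triple: `(n+2) − ℓ(Γ₃) + 1` if `v₂ ≥ v₁ + 2`, and `(n+2) − ℓ(Γ₃)`
otherwise. -/
def posInf {n : ℕ} (T : TripleFlag n) : ℕ :=
  if T.b₁.2 + 2 ≤ T.b₂.2 then (n + 2) - ell T.Γ₃ + 1 else (n + 2) - ell T.Γ₃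

/-- A Young diagram `Y` with `n+3` boxes together with a 2-element set `S` of removable
boxes of `Y` (boxes whose removal leaves a Young diagram). -/
structure MarkedPair (n : ℕ) where
  Y : YoungDiagram
  S : Finset (ℕ × ℕ)
  cardY : Y.card = n + 3
  cardS : S.card = 2
  removable : ∀ c ∈ S, c ∈ Y ∧ IsLowerSet (↑(Y.cells.erase c) : Set (ℕ × ℕ))

lemma eq_and_eq_of_pair_eq_pair {α β : Type*} [DecidableEq α] [LinearOrder β] (f : α → β)
    {a b c d : α} (h : ({a, b} : Finset α) = {c, d}) (hab : f a < f b) (hcd : f c < f d) :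
    a = c ∧ b = d := by
  have ha : a ∈ ({c, d} : Finset α) := h ▸ Finset.mem_insert_self a {b}
  have hb : b ∈ ({c, d} : Finset α) := h ▸ Finset.mem_insert_of_mem (Finset.mem_singleton_self b)
  simp only [Finset.mem_insert, Finset.mem_singleton] at ha hb
  rcases ha with rfl | rfl <;> rcases hb with rfl | rfl
  all_goals first
    | exact ⟨rfl, rfl⟩
    | exact absurd hab (lt_irrefl _)
    | exact absurd (hab.trans hcd) (lt_irrefl _)

lemma finsum_eq_finsum_of_fiber_pair {α β M : Type*} [AddCommMonoid M] [Finite α]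
    (b : α → β) (f : α → M) (g : β → M)
    (hfib : ∀ y, ∃ x x', x ≠ x' ∧ (∀ z, b z = y ↔ z = x ∨ z = x') ∧ f x + f x' = g y) :
    ∑ᶠ x, f x = ∑ᶠ y, g y := by
  classical
  have : Finite β := Finite.of_surjective b fun y => by
    obtain ⟨x, x', -, hx, -⟩ := hfib y
    exact ⟨x, (hx x).2 (Or.inl rfl)⟩
  have := Fintype.ofFinite α
  have := Fintype.ofFinite β
  rw [finsum_eq_sum_of_fintype, finsum_eq_sum_of_fintype, ← Finset.sum_fiberwise Finset.univ b f]
  refine Finset.sum_congr rfl fun y _ => ?_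
  obtain ⟨x, x', hne, hx, hsum⟩ := hfib y
  rw [show Finset.univ.filter (b · = y) = {x, x'} by ext z; simp [hx], Finset.sum_pair hne, hsum]

section Columns

variable (A : ℕ → Prop) [DecidablePred A]

/-- The columns `(p, q)` of the image of `x = (u, w)` when `A` is the set of addable columns;
`Nat.findGreatest A (w - 1)` is `w⁻`. -/
def pairCols (x : ℕ × ℕ) : ℕ × ℕ :=
  if x.2 = 0 then (0, x.1) else if x.1 < x.2 then x else (Nat.findGreatest A (x.2 - 1), x.1)

/-- `pos_∞` of the triple given by `Δ` and `x = (u, w)` is `n + 1 − ℓ(Δ) + colWeight x`. -/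
def colWeight (x : ℕ × ℕ) : ℕ := (if x.1 < x.2 then 1 else 0) + (if x.2 = 0 then 0 else 1)

variable {A}

lemma pairCols_spec {x : ℕ × ℕ} (h₀ : A 0) (hx₀ : 0 < x.1) (hx₁ : A x.1) (hx₂ : A x.2) :
    A (pairCols A x).1 ∧ A (pairCols A x).2 ∧ (pairCols A x).1 < (pairCols A x).2 := by
  unfold pairCols
  split_ifs with hw₀ huw
  · exact ⟨h₀, hx₁, hx₀⟩
  · exact ⟨hx₁, hx₂, huw⟩
  · have := Nat.findGreatest_le (P := A) (x.2 - 1)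
    exact ⟨Nat.findGreatest_spec (Nat.zero_le _) h₀, hx₁, by omega⟩

lemma pairCols_eq_iff {x : ℕ × ℕ} {p q w₀ : ℕ} (hx₀ : 0 < x.1) (hx₂ : A x.2) (hp : A p)
    (hw₀ : IsLeast {w | p < w ∧ A w} w₀) (hw₀q : w₀ ≤ q) :
    pairCols A x = (p, q) ↔ x = (q, w₀) ∨ (p = 0 ∧ x = (q, 0)) ∨ (0 < p ∧ x = (p, q)) := by
  obtain ⟨u, w⟩ := x
  obtain ⟨⟨hpw₀, hAw₀⟩, hmin⟩ := hw₀
  have hprev : Nat.findGreatest A (w₀ - 1) = p := by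
    refine le_antisymm (not_lt.1 fun hlt => ?_) (Nat.le_findGreatest (by omega) hp)
    have := hmin ⟨hlt, Nat.findGreatest_spec (m := p) (by omega) hp⟩
    have := Nat.findGreatest_le (P := A) (w₀ - 1)
    omega
  simp only [pairCols, Prod.mk.injEq] at hx₀ hx₂ ⊢
  split_ifs with hw0 huw
  · simp only [Prod.mk.injEq]
    omega
  · simp only [Prod.mk.injEq]
    omega
  · simp only [Prod.mk.injEq]
    constructor
    · rintro ⟨rfl, rfl⟩
      have hle := Nat.findGreatest_le (P := A) (w - 1)
      have hw₀w : w₀ ≤ w := hmin ⟨by omega, hx₂⟩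
      have hww₀ : w ≤ w₀ := not_lt.1 fun hlt =>
        absurd (Nat.le_findGreatest (show w₀ ≤ w - 1 by omega) hAw₀) (by omega)
      omega
    · rintro (⟨rfl, rfl⟩ | ⟨rfl, rfl, rfl⟩ | ⟨-, rfl, rfl⟩)
      · exact ⟨hprev, rfl⟩
      · exact absurd rfl hw0
      · omega

lemma exists_pairCols_fiber {p q : ℕ} (hp : A p) (hq : A q) (hpq : p < q) :
    ∃ a b : ℕ × ℕ, a ≠ b ∧ (0 < a.1 ∧ A a.1 ∧ A a.2) ∧ (0 < b.1 ∧ A b.1 ∧ A b.2) ∧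
      (∀ x : ℕ × ℕ, 0 < x.1 → A x.2 → (pairCols A x = (p, q) ↔ x = a ∨ x = b)) ∧
      colWeight a = (if p = 0 then 0 else 1) ∧ colWeight b = colWeight a + 1 := by
  classical
  have hex : ∃ w, p < w ∧ A w := ⟨q, hpq, hq⟩
  obtain ⟨w₀, hw₀⟩ : ∃ w₀, IsLeast {w | p < w ∧ A w} w₀ :=
    ⟨Nat.find hex, Nat.find_spec hex, fun w hw => Nat.find_min' hex hw⟩
  have hw₀q : w₀ ≤ q := hw₀.2 ⟨hpq, hq⟩
  obtain ⟨hpw₀, hAw₀⟩ := hw₀.1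
  have hfib (x : ℕ × ℕ) (hx₀ : 0 < x.1) (hx₂ : A x.2) := pairCols_eq_iff hx₀ hx₂ hp hw₀ hw₀q
  rcases Nat.eq_zero_or_pos p with rfl | hp₀
  · refine ⟨(q, 0), (q, w₀), by simp; omega, ⟨hpq, hq, hp⟩, ⟨hpq, hq, hAw₀⟩,
      fun x hx₀ hx₂ => ?_, ?_, ?_⟩
    · rw [hfib x hx₀ hx₂]
      grind
    all_goals simp only [colWeight]; split_ifs <;> omega
  · refine ⟨(q, w₀), (p, q), by simp; omega, ⟨by omega, hq, hAw₀⟩, ⟨hp₀, hp, hq⟩,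
      fun x hx₀ hx₂ => ?_, ?_, ?_⟩
    · rw [hfib x hx₀ hx₂]
      grind
    all_goals simp only [colWeight]; split_ifs <;> omega

end Columns

namespace YoungDiagram

/-- The cell `(μ.colLen j, j)` at the bottom of column `j` can be added to `μ`. -/
def IsAddableCol (μ : YoungDiagram) (j : ℕ) : Prop :=
  j = 0 ∨ μ.colLen j < μ.colLen (j - 1)

instance (μ : YoungDiagram) : DecidablePred μ.IsAddableCol :=
  fun _ => inferInstanceAs (Decidable (_ ∨ _))

variable {μ : YoungDiagram} {j : ℕ}

lemma isAddableCol_zero (μ : YoungDiagram) : μ.IsAddableCol 0 := Or.inl rfl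

lemma colLen_notMem (μ : YoungDiagram) (j : ℕ) : (μ.colLen j, j) ∉ μ := by
  simp [mem_iff_lt_colLen]

lemma isLowerSet_insert_colLen (h : μ.IsAddableCol j) :
    IsLowerSet (↑(insert (μ.colLen j, j) μ.cells) : Set (ℕ × ℕ)) := by
  rintro y ⟨a, b⟩ hle hy
  simp only [Finset.coe_insert, Set.mem_insert_iff, Finset.mem_coe, mem_cells] at hy ⊢
  rcases hy with rfl | hy
  · obtain ⟨ha, hb⟩ := Prod.mk_le_mk.1 hle
    by_cases hab : (a, b) = (μ.colLen j, j)
    · exact Or.inl hab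
    refine Or.inr (mem_iff_lt_colLen.2 ?_)
    rcases hb.lt_or_eq with hb | rfl
    · have := μ.colLen_anti b (j - 1) (by omega)
      rcases h with rfl | h <;> omega
    · exact lt_of_le_of_ne ha fun h => hab (by rw [h])
  · exact Or.inr (μ.isLowerSet hle hy)

def addCell (μ : YoungDiagram) (j : ℕ) (h : μ.IsAddableCol j) : YoungDiagram :=
  ⟨insert (μ.colLen j, j) μ.cells, isLowerSet_insert_colLen h⟩

lemma cells_addCell (h : μ.IsAddableCol j) :
    (μ.addCell j h).cells = insert (μ.colLen j, j) μ.cells := rfl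

lemma card_addCell (h : μ.IsAddableCol j) : (μ.addCell j h).card = μ.card + 1 :=
  Finset.card_insert_of_notMem (by simpa using μ.colLen_notMem j)

lemma colLen_addCell (h : μ.IsAddableCol j) (k : ℕ) :
    (μ.addCell j h).colLen k = μ.colLen k + if k = j then 1 else 0 := by
  refine eq_of_forall_lt_iff fun i => ?_
  rw [← mem_iff_lt_colLen, ← mem_cells, cells_addCell, Finset.mem_insert, mem_cells,
    mem_iff_lt_colLen, Prod.mk.injEq]
  split_ifs with hk
  · subst hk; omega
  · omega

lemma isAddableCol_succ_addCell (h : μ.IsAddableCol j) :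
    (μ.addCell j h).IsAddableCol (j + 1) := by
  right
  have := μ.colLen_anti j (j + 1) (by omega)
  simp only [colLen_addCell, Nat.add_sub_cancel]
  split_ifs <;> omega

lemma colLen_sup (μ ν : YoungDiagram) (j : ℕ) :
    (μ ⊔ ν).colLen j = max (μ.colLen j) (ν.colLen j) :=
  eq_of_forall_lt_iff fun i => by
    rw [← mem_iff_lt_colLen, mem_sup, lt_max_iff, mem_iff_lt_colLen, mem_iff_lt_colLen]

lemma isAddableCol_of_isLowerSet_insert {c : ℕ × ℕ} (hc : c ∉ μ)
    (h : IsLowerSet (↑(insert c μ.cells) : Set (ℕ × ℕ))) :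
    μ.IsAddableCol c.2 ∧ c = (μ.colLen c.2, c.2) := by
  obtain ⟨a, b⟩ := c
  have below : ∀ x, x ≤ (a, b) → x ≠ (a, b) → x ∈ μ := fun x hle hne => by
    simpa [hne] using h hle (by simp)
  have hab : μ.colLen b ≤ a := not_lt.1 fun hlt => hc (mem_iff_lt_colLen.2 hlt)
  have hcol : a = μ.colLen b := by
    rcases Nat.eq_zero_or_pos a with rfl | ha
    · omega
    · have := mem_iff_lt_colLen.1 (below (a - 1, b) (Prod.mk_le_mk.2 ⟨by omega, le_rfl⟩)
        (by simp; omega))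
      omega
  refine ⟨?_, by rw [hcol]⟩
  show μ.IsAddableCol b
  rcases Nat.eq_zero_or_pos b with rfl | hb
  · exact Or.inl rfl
  · have := mem_iff_lt_colLen.1 (below (a, b - 1) (Prod.mk_le_mk.2 ⟨le_rfl, by omega⟩)
      (by simp; omega))
    exact Or.inr (by omega)

lemma exists_addCell_eq (h : μ.IsAddableCol (j + 1)) :
    ∃ (ν : YoungDiagram) (hν : ν.IsAddableCol j), ν.addCell j hν = μ := by
  have hlt : μ.colLen (j + 1) < μ.colLen j := h.resolve_left (Nat.succ_ne_zero j)
  have hc : (μ.colLen j - 1, j) ∈ μ := mem_iff_lt_colLen.2 (by omega)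
  have hmax : ∀ y ∈ μ, (μ.colLen j - 1, j) ≤ y → y = (μ.colLen j - 1, j) := by
    rintro ⟨a, b⟩ hy hle
    obtain ⟨ha, hb⟩ : μ.colLen j - 1 ≤ a ∧ j ≤ b := hle
    have hy' := mem_iff_lt_colLen.1 hy
    have := μ.colLen_anti j b hb
    rcases hb.lt_or_eq with hb | rfl
    · have := μ.colLen_anti (j + 1) b hb
      omega
    · rw [Prod.mk.injEq]
      omega
  let ν : YoungDiagram := ⟨μ.cells.erase (μ.colLen j - 1, j), fun x y hle hx => by
    simp only [Finset.coe_erase, Set.mem_sdiff, Finset.mem_coe, mem_cells,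
      Set.mem_singleton_iff] at hx ⊢
    exact ⟨μ.isLowerSet hle hx.1, fun hyc => hx.2 (hmax x hx.1 (hyc ▸ hle))⟩⟩
  have hins : insert (μ.colLen j - 1, j) ν.cells = μ.cells :=
    Finset.insert_erase (by simpa using hc)
  obtain ⟨hν, hcν⟩ := isAddableCol_of_isLowerSet_insert (μ := ν) (c := (μ.colLen j - 1, j))
    (by simp [← mem_cells, ν]) (by rw [hins]; exact μ.isLowerSet)
  exact ⟨ν, hν, YoungDiagram.ext (by rw [cells_addCell, ← hcν, hins])⟩

lemma isLowerSet_sdiff {S : Finset (ℕ × ℕ)}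
    (hS : ∀ c ∈ S, IsLowerSet (↑(μ.cells.erase c) : Set (ℕ × ℕ))) :
    IsLowerSet (↑(μ.cells \ S) : Set (ℕ × ℕ)) := by
  intro y x hle hy
  simp only [Finset.coe_sdiff, Set.mem_sdiff, Finset.mem_coe] at hy ⊢
  refine ⟨μ.isLowerSet hle hy.1, fun hx => ?_⟩
  have := hS x hx hle (Finset.mem_coe.2 (Finset.mem_erase.2 ⟨by rintro rfl; exact hy.2 hx, hy.1⟩))
  simp at this

lemma cells_subset_range (μ : YoungDiagram) :
    μ.cells ⊆ Finset.range μ.card ×ˢ Finset.range μ.card := by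
  rintro ⟨i, j⟩ hc
  have hcol : μ.colLen j ≤ μ.card := by
    rw [colLen_eq_card]; exact Finset.card_le_card fun x hx => (mem_col_iff.1 hx).1
  have hrow : μ.rowLen i ≤ μ.card := by
    rw [rowLen_eq_card]; exact Finset.card_le_card fun x hx => (mem_row_iff.1 hx).1
  rw [mem_cells] at hc
  simp only [Finset.mem_product, Finset.mem_range]
  exact ⟨(mem_iff_lt_colLen.1 hc).trans_le hcol, (mem_iff_lt_rowLen.1 hc).trans_le hrow⟩

end YoungDiagram

open YoungDiagram

lemma ell_eq_colLen_zero (μ : YoungDiagram) : ell μ = μ.colLen 0 := by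
  rw [colLen_eq_card]; rfl

lemma ell_le_card (μ : YoungDiagram) : ell μ ≤ μ.card := Finset.card_filter_le _ _

lemma ell_addCell {μ : YoungDiagram} {j : ℕ} (h : μ.IsAddableCol j) :
    ell (μ.addCell j h) = ell μ + if j = 0 then 1 else 0 := by
  simp only [ell_eq_colLen_zero, colLen_addCell, eq_comm]

namespace TripleFlag

variable {n : ℕ} (T : TripleFlag n)

lemma isAddableCol_b₁ : T.Γ₁.IsAddableCol T.b₁.2 ∧ T.b₁ = (T.Γ₁.colLen T.b₁.2, T.b₁.2) :=
  isAddableCol_of_isLowerSet_insert T.not_mem₁ (T.cells₂ ▸ T.Γ₂.isLowerSet)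

lemma isAddableCol_b₂ : T.Γ₂.IsAddableCol T.b₂.2 ∧ T.b₂ = (T.Γ₂.colLen T.b₂.2, T.b₂.2) :=
  isAddableCol_of_isLowerSet_insert T.not_mem₂ (T.cells₃ ▸ T.Γ₃.isLowerSet)

lemma Γ₂_eq_addCell : T.Γ₂ = T.Γ₁.addCell T.b₁.2 T.isAddableCol_b₁.1 :=
  YoungDiagram.ext (by rw [cells_addCell, ← T.isAddableCol_b₁.2, T.cells₂])

lemma Γ₃_eq_addCell : T.Γ₃ = T.Γ₂.addCell T.b₂.2 T.isAddableCol_b₂.1 :=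
  YoungDiagram.ext (by rw [cells_addCell, ← T.isAddableCol_b₂.2, T.cells₃])

lemma isAddableCol_succ_b₁ : T.Γ₂.IsAddableCol (T.b₁.2 + 1) := by
  rw [T.Γ₂_eq_addCell]
  exact isAddableCol_succ_addCell _

lemma colLen_Γ₂_b₁ : T.Γ₂.colLen T.b₁.2 = T.b₁.1 + 1 := by
  conv_rhs => rw [T.isAddableCol_b₁.2]
  rw [T.Γ₂_eq_addCell, colLen_addCell, if_pos rfl]

lemma card₂ : T.Γ₂.card = n + 1 := by
  rw [T.Γ₂_eq_addCell, card_addCell, T.card₁]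

lemma ell_Γ₃ : ell T.Γ₃ = ell T.Γ₂ + if T.b₂.2 = 0 then 1 else 0 := by
  rw [T.Γ₃_eq_addCell, ell_addCell]

def cols : ℕ × ℕ := (T.b₁.2 + 1, T.b₂.2)

lemma ext_of_cols {T T' : TripleFlag n} (h₂ : T.Γ₂ = T'.Γ₂) (h : T.cols = T'.cols) : T = T' := by
  obtain ⟨h₁, h₃⟩ : T.b₁.2 = T'.b₁.2 ∧ T.b₂.2 = T'.b₂.2 := by simpa [cols] using h
  have hb₁ : T.b₁ = T'.b₁ :=
    Prod.ext (by have := T.colLen_Γ₂_b₁; have := T'.colLen_Γ₂_b₁; grind) h₁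
  have hb₂ : T.b₂ = T'.b₂ := by rw [T.isAddableCol_b₂.2, T'.isAddableCol_b₂.2, h₂, h₃]
  have hΓ₁ : T.Γ₁ = T'.Γ₁ := YoungDiagram.ext <| by
    rw [← Finset.erase_insert (s := T.Γ₁.cells) (by simpa using T.not_mem₁),
      ← Finset.erase_insert (s := T'.Γ₁.cells) (by simpa using T'.not_mem₁), ← T.cells₂,
      ← T'.cells₂, h₂, hb₁]
  have hΓ₃ : T.Γ₃ = T'.Γ₃ := YoungDiagram.ext <| by rw [T.cells₃, T'.cells₃, h₂, hb₂]
  cases T; cases T'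
  simp_all

lemma exists_of_cols {Δ : YoungDiagram} {x : ℕ × ℕ} (hΔ : Δ.card = n + 1) (hx₀ : 0 < x.1)
    (hx₁ : Δ.IsAddableCol x.1) (hx₂ : Δ.IsAddableCol x.2) :
    ∃ T : TripleFlag n, T.Γ₂ = Δ ∧ T.cols = x := by
  obtain ⟨u, w⟩ := x
  obtain ⟨v, rfl⟩ : ∃ v, u = v + 1 := ⟨u - 1, by simp at hx₀; omega⟩
  obtain ⟨ν, hν, rfl⟩ := exists_addCell_eq hx₁
  refine ⟨⟨ν, ν.addCell v hν, (ν.addCell v hν).addCell w hx₂, (ν.colLen v, v),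
    ((ν.addCell v hν).colLen w, w), ?_, colLen_notMem _ _, rfl, colLen_notMem _ _, rfl⟩,
    rfl, rfl⟩
  rw [card_addCell] at hΔ
  omega

lemma posInf_eq : posInf T = n + 1 - ell T.Γ₂ + colWeight T.cols := by
  have := T.card₂ ▸ ell_le_card T.Γ₂
  rw [posInf, colWeight, cols, T.ell_Γ₃]
  split_ifs <;> omega

end TripleFlag

namespace MarkedPair

variable {n : ℕ}

lemma ext {P P' : MarkedPair n} (hY : P.Y = P'.Y) (hS : P.S = P'.S) : P = P' := by
  cases P; cases P'; simp_all

section ofCols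

variable {Δ : YoungDiagram} {p q : ℕ} (hΔ : Δ.card = n + 1) (hp : Δ.IsAddableCol p)
  (hq : Δ.IsAddableCol q) (hpq : p < q)

def ofCols : MarkedPair n where
  Y := Δ.addCell p hp ⊔ Δ.addCell q hq
  S := {(Δ.colLen p, p), (Δ.colLen q, q)}
  cardY := by
    have hne : (Δ.colLen p, p) ∉ insert (Δ.colLen q, q) Δ.cells := by
      simp [hpq.ne, Δ.colLen_notMem]
    show (Δ.addCell p hp ⊔ Δ.addCell q hq).cells.card = n + 3
    rw [cells_sup, cells_addCell, cells_addCell, Finset.insert_union, Finset.union_insert,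
      Finset.union_self, Finset.card_insert_of_notMem hne,
      Finset.card_insert_of_notMem (by simpa using Δ.colLen_notMem q)]
    exact congrArg (· + 2) hΔ
  cardS := Finset.card_pair (by simp [hpq.ne])
  removable := by
    have erase_eq : ∀ {a b} (ha : Δ.IsAddableCol a) (hb : Δ.IsAddableCol b), a ≠ b →
        (Δ.addCell a ha ⊔ Δ.addCell b hb).cells.erase (Δ.colLen a, a) =
          (Δ.addCell b hb).cells := by
      intro a b ha hb hab
      ext x
      simp only [Finset.mem_erase, cells_sup, Finset.mem_union, cells_addCell, Finset.mem_insert]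
      have := Δ.colLen_notMem a
      grind [mem_cells]
    simp only [Finset.mem_insert, Finset.mem_singleton]
    rintro c (rfl | rfl)
    · exact ⟨mem_sup.2 (Or.inl (by simp [← mem_cells, cells_addCell])),
        by rw [erase_eq hp hq hpq.ne]; exact (Δ.addCell q hq).isLowerSet⟩
    · exact ⟨mem_sup.2 (Or.inr (by simp [← mem_cells, cells_addCell])),
        by rw [sup_comm, erase_eq hq hp hpq.ne']; exact (Δ.addCell p hp).isLowerSet⟩

lemma cells_eq_sdiff_ofCols :
    Δ.cells = (ofCols hΔ hp hq hpq).Y.cells \ (ofCols hΔ hp hq hpq).S := by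
  ext x
  simp only [ofCols, Finset.mem_sdiff, cells_sup, Finset.mem_union, cells_addCell,
    Finset.mem_insert, Finset.mem_singleton]
  have := Δ.colLen_notMem p
  have := Δ.colLen_notMem q
  grind [mem_cells]

lemma ell_ofCols : ell (ofCols hΔ hp hq hpq).Y = ell Δ + if p = 0 then 1 else 0 := by
  simp only [ofCols, ell_eq_colLen_zero, colLen_sup, colLen_addCell]
  split_ifs <;> omega

end ofCols

lemma ofCols_eq_ofCols_iff {Δ Δ' : YoungDiagram} {p q p' q' : ℕ} {hΔ : Δ.card = n + 1}
    {hp : Δ.IsAddableCol p} {hq : Δ.IsAddableCol q} {hpq : p < q} {hΔ' : Δ'.card = n + 1}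
    {hp' : Δ'.IsAddableCol p'} {hq' : Δ'.IsAddableCol q'} {hpq' : p' < q'} :
    ofCols hΔ hp hq hpq = ofCols hΔ' hp' hq' hpq' ↔ Δ = Δ' ∧ p = p' ∧ q = q' := by
  constructor
  · intro h
    obtain rfl : Δ = Δ' := YoungDiagram.ext <| by
      rw [cells_eq_sdiff_ofCols hΔ hp hq hpq, cells_eq_sdiff_ofCols hΔ' hp' hq' hpq', h]
    obtain ⟨hp, hq⟩ := eq_and_eq_of_pair_eq_pair Prod.snd (congrArg MarkedPair.S h) hpq hpq'
    exact ⟨rfl, congrArg Prod.snd hp, congrArg Prod.snd hq⟩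
  · rintro ⟨rfl, rfl, rfl⟩
    rfl

variable (P : MarkedPair n)

lemma S_subset_cells : P.S ⊆ P.Y.cells := fun c hc => (P.removable c hc).1

def base : YoungDiagram :=
  ⟨P.Y.cells \ P.S, isLowerSet_sdiff fun c hc => (P.removable c hc).2⟩

lemma card_base : P.base.card = n + 1 := by
  have := Finset.card_sdiff_of_subset P.S_subset_cells
  have hY : P.Y.cells.card = n + 3 := P.cardY
  rw [hY, P.cardS] at this
  exact this

lemma isAddableCol_base {c : ℕ × ℕ} (hc : c ∈ P.S) :
    P.base.IsAddableCol c.2 ∧ c = (P.base.colLen c.2, c.2) := by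
  have hins : insert c P.base.cells = P.Y.cells \ P.S.erase c := by
    have := P.S_subset_cells hc
    ext x
    simp only [base, Finset.mem_insert, Finset.mem_sdiff, Finset.mem_erase]
    grind
  refine isAddableCol_of_isLowerSet_insert (by simp [← mem_cells, base, hc]) ?_
  rw [hins]
  exact isLowerSet_sdiff fun d hd => (P.removable d (Finset.mem_of_mem_erase hd)).2

lemma eq_ofCols {c d : ℕ × ℕ} (hS : P.S = {c, d}) (hcd : c.2 < d.2) :
    P = ofCols P.card_base (P.isAddableCol_base (by simp [hS])).1
      (P.isAddableCol_base (by simp [hS])).1 hcd := by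
  have hc := (P.isAddableCol_base (c := c) (by simp [hS])).2
  have hd := (P.isAddableCol_base (c := d) (by simp [hS])).2
  refine ext (YoungDiagram.ext ?_) ?_
  · ext x
    have := P.S_subset_cells
    simp only [ofCols, cells_sup, cells_addCell, Finset.mem_union, Finset.mem_insert, ← hc, ← hd]
    simp only [base, Finset.mem_sdiff, hS] at this ⊢
    grind
  · show P.S = {(P.base.colLen c.2, c.2), (P.base.colLen d.2, d.2)}
    rw [← hc, ← hd, hS]

lemma exists_eq_ofCols :
    ∃ (Δ : YoungDiagram) (p q : ℕ) (hΔ : Δ.card = n + 1) (hp : Δ.IsAddableCol p)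
      (hq : Δ.IsAddableCol q) (hpq : p < q), P = ofCols hΔ hp hq hpq := by
  obtain ⟨c, d, hne, hS⟩ := Finset.card_eq_two.1 P.cardS
  have hc := (P.isAddableCol_base (c := c) (by simp [hS])).2
  have hd := (P.isAddableCol_base (c := d) (by simp [hS])).2
  rcases lt_or_gt_of_ne (fun h : c.2 = d.2 => hne (by rw [hc, hd, h])) with h | h
  · exact ⟨_, _, _, _, _, _, _, P.eq_ofCols hS h⟩
  · exact ⟨_, _, _, _, _, _, _, P.eq_ofCols (hS.trans (Finset.pair_comm c d)) h⟩

lemma ell_Y_le : ell P.Y ≤ n + 2 := by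
  obtain ⟨Δ, p, q, hΔ, hp, hq, hpq, rfl⟩ := P.exists_eq_ofCols
  have := hΔ ▸ ell_le_card Δ
  rw [ell_ofCols]
  split_ifs <;> omega

instance : Finite (MarkedPair n) := by
  let R := (Finset.range (n + 3) ×ˢ Finset.range (n + 3)).powerset
  have hY (P : MarkedPair n) : P.Y.cells ∈ R :=
    Finset.mem_powerset.2 (P.cardY ▸ P.Y.cells_subset_range)
  have hS (P : MarkedPair n) : P.S ∈ R :=
    Finset.mem_powerset.2 (P.S_subset_cells.trans (Finset.mem_powerset.1 (hY P)))
  refine Finite.of_injective (β := R × R) (fun P => (⟨P.Y.cells, hY P⟩, ⟨P.S, hS P⟩))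
    fun P P' h => ?_
  simp only [Prod.mk.injEq, Subtype.mk.injEq] at h
  exact ext (YoungDiagram.ext h.1) h.2

end MarkedPair

namespace TripleFlag

variable {n : ℕ}

def toMarkedPair (T : TripleFlag n) : MarkedPair n :=
  have h := pairCols_spec (x := T.cols) T.Γ₂.isAddableCol_zero (Nat.succ_pos _)
    T.isAddableCol_succ_b₁ T.isAddableCol_b₂.1
  MarkedPair.ofCols T.card₂ h.1 h.2.1 h.2.2

lemma toMarkedPair_eq_ofCols_iff (T : TripleFlag n) {Δ : YoungDiagram} {p q : ℕ}
    {hΔ : Δ.card = n + 1} {hp : Δ.IsAddableCol p} {hq : Δ.IsAddableCol q} {hpq : p < q} :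
    T.toMarkedPair = MarkedPair.ofCols hΔ hp hq hpq ↔
      T.Γ₂ = Δ ∧ pairCols Δ.IsAddableCol T.cols = (p, q) := by
  rw [toMarkedPair, MarkedPair.ofCols_eq_ofCols_iff, Prod.ext_iff]
  constructor <;> rintro ⟨rfl, h⟩ <;> exact ⟨rfl, h⟩

lemma exists_fiber_toMarkedPair (P : MarkedPair n) :
    ∃ Γ H : TripleFlag n, Γ ≠ H ∧ Γ.toMarkedPair = P ∧ H.toMarkedPair = P ∧
      (∀ T : TripleFlag n, T.toMarkedPair = P → T = Γ ∨ T = H) ∧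
      posInf Γ = (n + 2) - ell P.Y ∧ posInf H = (n + 3) - ell P.Y := by
  obtain ⟨Δ, p, q, hΔ, hp, hq, hpq, rfl⟩ := P.exists_eq_ofCols
  obtain ⟨a, b, hab, ha, hb, hfib, hwa, hwb⟩ := exists_pairCols_fiber hp hq hpq
  have hmem (T : TripleFlag n) :
      T.toMarkedPair = MarkedPair.ofCols hΔ hp hq hpq ↔ T.Γ₂ = Δ ∧ (T.cols = a ∨ T.cols = b) := by
    rw [toMarkedPair_eq_ofCols_iff, and_congr_right_iff]
    rintro rfl
    exact hfib T.cols (Nat.succ_pos _) T.isAddableCol_b₂.1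
  obtain ⟨Γ, hΓ, hΓa⟩ := exists_of_cols hΔ ha.1 ha.2.1 ha.2.2
  obtain ⟨H, hH, hHb⟩ := exists_of_cols hΔ hb.1 hb.2.1 hb.2.2
  have hellY := MarkedPair.ell_ofCols hΔ hp hq hpq
  have hellΔ := hΔ ▸ ell_le_card Δ
  refine ⟨Γ, H, fun h => hab (by rw [← hΓa, ← hHb, h]), (hmem Γ).2 ⟨hΓ, Or.inl hΓa⟩,
    (hmem H).2 ⟨hH, Or.inr hHb⟩, fun T hT => ?_, ?_, ?_⟩
  · obtain ⟨hT, hTa | hTb⟩ := (hmem T).1 hT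
    · exact Or.inl (ext_of_cols (hT.trans hΓ.symm) (hTa.trans hΓa.symm))
    · exact Or.inr (ext_of_cols (hT.trans hH.symm) (hTb.trans hHb.symm))
  · rw [Γ.posInf_eq, hΓ, hΓa, hwa, hellY]
    split_ifs <;> omega
  · rw [H.posInf_eq, hH, hHb, hwb, hwa, hellY]
    split_ifs <;> omega

instance : Finite (TripleFlag n) := by
  refine Set.finite_univ_iff.1 (Set.Finite.of_finite_fibers toMarkedPair (Set.toFinite _) ?_)
  rintro P -
  obtain ⟨Γ, H, -, -, -, hfib, -⟩ := exists_fiber_toMarkedPair P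
  exact (Set.toFinite {Γ, H}).subset fun T hT => by simpa using hfib T hT.2

end TripleFlag

/-- There is a 2-to-1 map `b` from triples to marked pairs such that the two elements
`Γ, H` of the fiber over `(Y,S)` satisfy `pos_∞(Γ) = (n+2)−ℓ(Y)` and
`pos_∞(H) = (n+3)−ℓ(Y)`; consequently
`Σ_Γ q^{pos_∞(Γ)} = (1+q)·Σ_{(Y,S)} q^{(n+2)−ℓ(Y)}`. -/
theorem statement5 (n : ℕ) :
    ∃ b : TripleFlag n → MarkedPair n,
      (∀ P : MarkedPair n, ∃ Γ H : TripleFlag n, Γ ≠ H ∧ b Γ = P ∧ b H = P ∧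
          (∀ T : TripleFlag n, b T = P → T = Γ ∨ T = H) ∧
          posInf Γ = (n + 2) - ell P.Y ∧ posInf H = (n + 3) - ell P.Y) ∧
      (∑ᶠ T : TripleFlag n, (X : Polynomial ℤ) ^ posInf T)
        = (1 + X) * ∑ᶠ P : MarkedPair n, (X : Polynomial ℤ) ^ ((n + 2) - ell P.Y) := by
  refine ⟨TripleFlag.toMarkedPair, TripleFlag.exists_fiber_toMarkedPair, ?_⟩
  rw [mul_finsum]
  refine finsum_eq_finsum_of_fiber_pair TripleFlag.toMarkedPair _ _ fun P => ?_
  obtain ⟨Γ, H, hne, hΓ, hH, huniq, hposΓ, hposH⟩ := TripleFlag.exists_fiber_toMarkedPair P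
  refine ⟨Γ, H, hne, fun T => ⟨huniq T, by rintro (rfl | rfl) <;> assumption⟩, ?_⟩
  rw [hposΓ, hposH, show n + 3 - ell P.Y = n + 2 - ell P.Y + 1 by have := P.ell_Y_le; omega,
    pow_succ]
  ring
end

section
/- Let Γ be a Young diagram with n boxes and let I_Γ ⊆ R = ℂ[x,y] be the associated monomial ideal. Then the ℂ-vector space Hom_R(I_Γ, R/I_Γ) of R-module homomorphisms has dimension exactly 2n. -/
/-!
A homomorphism `ψ : I_Γ → R/I_Γ` is determined by the coefficients `[x^t] ψ(x^s)` for the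
arrows `(s, t)`, `s ∉ Γ`, `t ∈ Γ`. Compatibility with multiplication by `x_i` says exactly
that these coefficients are unchanged when an arrow is translated by `e_i` (staying an arrow), and
vanish on arrows with `s - e_i ∉ Γ` and `t_i = 0`; conversely every such family of coefficients
comes from a homomorphism. Hence the dimension is the number of translation classes of arrows
that contain no such obstructed arrow.

Each of these classes contains exactly one of the `2n` arrows attached to the cells `c ∈ Γ`,
one ending at the last cell of the row of `c` and one at the last cell of its column. Sliding
an arrow down and across reaches one of them or an obstruction; classes are told apart by the
displacement `t - s` together with the number of columns before the source's column across
which the sources of arrows of that displacement are disconnected, both invariant under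
translation.
-/

set_option synthInstance.maxHeartbeats 1000000
set_option maxHeartbeats 1000000

noncomputable section

open MvPolynomial

/-- `R = ℂ[x,y]`. -/
abbrev Rxy : Type := MvPolynomial (Fin 2) ℂ

def monomialIdeal (Γ : YoungDiagram) : Ideal Rxy :=
  Ideal.span {m : Rxy | ∃ u v : ℕ, (u, v) ∉ Γ ∧ m = X 0 ^ u * X 1 ^ v}

theorem Relation.EqvGen.apply_eq_of_rel {α β : Type*} {r : α → α → Prop} {f : α → β}
    (hf : ∀ x y, r x y → f x = f y) {x y : α} (h : Relation.EqvGen r x y) : f x = f y :=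
  Setoid.eqvGen_le (s := Setoid.ker f) hf h

theorem Relation.EqvGen.map {α β : Type*} {r : α → α → Prop} {s : β → β → Prop}
    {f : α → β} (hf : ∀ x y, r x y → s (f x) (f y)) {x y : α} (h : Relation.EqvGen r x y) :
    Relation.EqvGen s (f x) (f y) := by
  induction h with
  | rel x y h => exact .rel _ _ (hf x y h)
  | refl x => exact .refl _
  | symm x y _ ih => exact .symm _ _ ih
  | trans x y z _ _ ih₁ ih₂ => exact .trans _ _ _ ih₁ ih₂

/-! ### Arrows of a Young diagram -/

def cellUnit (i : Fin 2) : ℕ × ℕ := ![(1, 0), (0, 1)] i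

abbrev CellPair : Type := (ℕ × ℕ) × (ℕ × ℕ)

def displacement (z : CellPair) : ℤ × ℤ := ((z.2.1 : ℤ) - z.1.1, (z.2.2 : ℤ) - z.1.2)

namespace YoungDiagram

variable (Γ : YoungDiagram)

/-- The arrow `(s, t)` stands for the coefficient of `x^t` in `ψ(x^s)`, for
`ψ : I_Γ → R/I_Γ`. -/
def IsArrow (z : CellPair) : Prop := z.1 ∉ Γ ∧ z.2 ∈ Γ

/-- Multiplying by `x_i` relates the coefficient of `ψ` at `(s, t)` to the one at
`(s + e_i, t + e_i)`. -/
def ArrowStep (z w : CellPair) : Prop :=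
  z.1 ∉ Γ ∧ w.2 ∈ Γ ∧ ∃ i, w = z + (cellUnit i, cellUnit i)

def ArrowRel : CellPair → CellPair → Prop := Relation.EqvGen Γ.ArrowStep

/-- If `s = s' + e_i` with `s' ∉ Γ` while `t_i = 0`, then the coefficient of `x^t` in
`ψ(x^s) = x_i ψ(x^{s'})` vanishes. -/
def Obstructed (z : CellPair) : Prop :=
  ∃ i, cellUnit i ≤ z.1 ∧ z.1 - cellUnit i ∉ Γ ∧ ¬ cellUnit i ≤ z.2

def IsSourceAt (d : ℤ × ℤ) (s : ℕ × ℕ) : Prop :=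
  ∃ t, Γ.IsArrow (s, t) ∧ displacement (s, t) = d

def ColumnsLinked (d : ℤ × ℤ) (v : ℕ) : Prop :=
  ∃ u, Γ.IsSourceAt d (u, v) ∧ Γ.IsSourceAt d (u, v + 1)

open Classical in
/-- Invariant under `ArrowRel`, since a `y`-step crosses a linked pair of columns; it separates
row arrows of equal displacement. -/
def breakCount (z : CellPair) : ℕ :=
  ((Finset.range z.1.2).filter fun v => ¬ Γ.ColumnsLinked (displacement z) v).card

/-- `rowArrow c` and `colArrow c` are the two arrows attached to the cell `c`, of
displacements `(-1 - leg c, arm c)` and `(leg c, -1 - arm c)`. -/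
def rowArrow (c : ℕ × ℕ) : CellPair := ((Γ.colLen c.2, c.2), (c.1, Γ.rowLen c.1 - 1))

def colArrow (c : ℕ × ℕ) : CellPair := ((c.1, Γ.rowLen c.1), (Γ.colLen c.2 - 1, c.2))

def basicArrow : Γ.cells ⊕ Γ.cells → CellPair :=
  Sum.elim (fun c => Γ.rowArrow c) (fun c => Γ.colArrow c)

variable {Γ}

theorem mem_of_le {c c' : ℕ × ℕ} (h : c' ≤ c) (hc : c ∈ Γ) : c' ∈ Γ :=
  Γ.isLowerSet h hc

theorem arrowStep_x {u v p q : ℕ} (hs : (u, v) ∉ Γ) (ht : (p + 1, q) ∈ Γ) :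
    Γ.ArrowStep ((u, v), (p, q)) ((u + 1, v), (p + 1, q)) := ⟨hs, ht, 0, rfl⟩

theorem arrowStep_y {u v p q : ℕ} (hs : (u, v) ∉ Γ) (ht : (p, q + 1) ∈ Γ) :
    Γ.ArrowStep ((u, v), (p, q)) ((u, v + 1), (p, q + 1)) := ⟨hs, ht, 1, rfl⟩

theorem obstructed_iff {u v p q : ℕ} : Γ.Obstructed ((u, v), (p, q)) ↔
    (p = 0 ∧ 1 ≤ u ∧ (u - 1, v) ∉ Γ) ∨ (q = 0 ∧ 1 ≤ v ∧ (u, v - 1) ∉ Γ) := by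
  simp [Obstructed, Fin.exists_fin_two, cellUnit, Prod.le_def]
  tauto

theorem ArrowStep.isArrow_left {z w : CellPair} (h : Γ.ArrowStep z w) : Γ.IsArrow z := by
  obtain ⟨hs, ht, i, rfl⟩ := h
  exact ⟨hs, mem_of_le le_self_add ht⟩

theorem ArrowStep.isArrow_right {z w : CellPair} (h : Γ.ArrowStep z w) : Γ.IsArrow w := by
  obtain ⟨hs, ht, i, rfl⟩ := h
  exact ⟨fun hs' => hs (mem_of_le le_self_add hs'), ht⟩

theorem ArrowStep.arrowRel {z w : CellPair} (h : Γ.ArrowStep z w) : Γ.ArrowRel z w :=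
  Relation.EqvGen.rel _ _ h

theorem arrowRel_refl (z : CellPair) : Γ.ArrowRel z z := Relation.EqvGen.refl z

theorem ArrowRel.symm {z w : CellPair} (h : Γ.ArrowRel z w) : Γ.ArrowRel w z :=
  Relation.EqvGen.symm _ _ h

theorem ArrowRel.trans {x z w : CellPair} (h : Γ.ArrowRel x z) (h' : Γ.ArrowRel z w) :
    Γ.ArrowRel x w :=
  Relation.EqvGen.trans _ _ _ h h'

theorem ArrowStep.displacement_eq {z w : CellPair} (h : Γ.ArrowStep z w) :
    displacement z = displacement w := by
  obtain ⟨-, -, i, rfl⟩ := h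
  fin_cases i <;> simp [displacement, cellUnit]

theorem ArrowRel.displacement_eq {z w : CellPair} (h : Γ.ArrowRel z w) :
    displacement z = displacement w :=
  Relation.EqvGen.apply_eq_of_rel (r := Γ.ArrowStep)
    (fun _ _ => ArrowStep.displacement_eq) h

theorem ArrowStep.breakCount_eq {z w : CellPair} (h : Γ.ArrowStep z w) :
    Γ.breakCount z = Γ.breakCount w := by
  classical
  have hd := h.displacement_eq
  have hz := h.isArrow_left
  obtain ⟨hs, ht, i, rfl⟩ := h
  obtain ⟨⟨u, v⟩, ⟨p, q⟩⟩ := z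
  fin_cases i
  · simp only [breakCount]
    rw [← hd]
    simp [cellUnit]
  · have hs' : (u, v + 1) ∉ Γ := fun h => hs (mem_of_le (by simp [Prod.le_def]) h)
    have ht' : (p, q + 1) ∈ Γ := by simpa [cellUnit] using ht
    have hlinked : Γ.ColumnsLinked (displacement ((u, v), (p, q))) v :=
      ⟨u, ⟨(p, q), hz, rfl⟩, ⟨(p, q + 1), ⟨hs', ht'⟩, by simp [displacement]⟩⟩
    simp only [breakCount, ← hd]
    simp [cellUnit, Finset.range_add_one, Finset.filter_insert, hlinked]

theorem ArrowRel.breakCount_eq {z w : CellPair} (h : Γ.ArrowRel z w) :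
    Γ.breakCount z = Γ.breakCount w :=
  Relation.EqvGen.apply_eq_of_rel (r := Γ.ArrowStep)
    (fun _ _ => ArrowStep.breakCount_eq) h

theorem breakCount_lt {z w : CellPair} (hd : displacement z = displacement w)
    (hv : z.1.2 < w.1.2) (hz : ¬ Γ.ColumnsLinked (displacement z) z.1.2) :
    Γ.breakCount z < Γ.breakCount w := by
  classical
  refine Finset.card_lt_card ⟨?_, fun hsub => ?_⟩
  · rw [← hd]
    exact Finset.filter_subset_filter _ (Finset.range_subset_range.2 hv.le)
  · have := @hsub z.1.2 (by simp [← hd, hv, hz])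
    simp at this

theorem isArrow_transpose {z : CellPair} :
    Γ.transpose.IsArrow (z.map Prod.swap Prod.swap) ↔ Γ.IsArrow z := by
  simp [IsArrow, mem_transpose]

theorem ArrowStep.transpose {z w : CellPair} (h : Γ.ArrowStep z w) :
    Γ.transpose.ArrowStep (z.map Prod.swap Prod.swap) (w.map Prod.swap Prod.swap) := by
  obtain ⟨hs, ht, i, rfl⟩ := h
  refine ⟨by simpa [mem_transpose] using hs, by simpa [mem_transpose] using ht, ?_⟩
  obtain ⟨⟨u, v⟩, ⟨p, q⟩⟩ := z
  fin_cases i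
  exacts [⟨1, by simp [cellUnit]⟩, ⟨0, by simp [cellUnit]⟩]

theorem ArrowRel.transpose {z w : CellPair} (h : Γ.ArrowRel z w) :
    Γ.transpose.ArrowRel (z.map Prod.swap Prod.swap) (w.map Prod.swap Prod.swap) :=
  Relation.EqvGen.map (r := Γ.ArrowStep) (fun _ _ => ArrowStep.transpose) h

theorem arrowRel_transpose {z w : CellPair} :
    Γ.transpose.ArrowRel (z.map Prod.swap Prod.swap) (w.map Prod.swap Prod.swap) ↔
      Γ.ArrowRel z w :=
  ⟨fun h => by simpa [transpose_transpose, Prod.map_map] using h.transpose,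
    ArrowRel.transpose⟩

theorem obstructed_transpose {z : CellPair} :
    Γ.transpose.Obstructed (z.map Prod.swap Prod.swap) ↔ Γ.Obstructed z := by
  obtain ⟨⟨u, v⟩, ⟨p, q⟩⟩ := z
  simp only [Prod.map_apply, Prod.swap_prod_mk, obstructed_iff, mem_transpose]
  tauto

theorem colArrow_transpose (c : ℕ × ℕ) :
    (Γ.colArrow c).map Prod.swap Prod.swap = Γ.transpose.rowArrow c.swap := by
  simp [rowArrow, colArrow, rowLen_transpose, colLen_transpose]

theorem isArrow_rowArrow {c : ℕ × ℕ} (hc : c ∈ Γ) : Γ.IsArrow (Γ.rowArrow c) := by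
  obtain ⟨p, q⟩ := c
  have := mem_iff_lt_rowLen.1 hc
  refine ⟨fun h => (mem_iff_lt_colLen.1 h).false, ?_⟩
  exact mem_iff_lt_rowLen.2 (show Γ.rowLen p - 1 < Γ.rowLen p by omega)

theorem isArrow_colArrow {c : ℕ × ℕ} (hc : c ∈ Γ) : Γ.IsArrow (Γ.colArrow c) := by
  rw [← isArrow_transpose, colArrow_transpose]
  exact isArrow_rowArrow (mem_transpose.2 hc)

theorem not_rowsLinked_rowArrow {c : ℕ × ℕ} (hc : c ∈ Γ) :
    ¬ Γ.ColumnsLinked (displacement (Γ.rowArrow c)) c.2 := by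
  obtain ⟨p, q⟩ := c
  rintro ⟨u, ⟨t, ⟨hs, -⟩, -⟩, ⟨t', ⟨-, ht'⟩, hd'⟩⟩
  have hq := mem_iff_lt_rowLen.1 hc
  have hu : Γ.colLen q ≤ u := not_lt.1 fun h => hs (mem_iff_lt_colLen.2 h)
  simp only [displacement, rowArrow, Prod.ext_iff] at hd'
  -- `t'` would lie in row `≥ p` and column `rowLen p`
  have hcol : t'.2 = Γ.rowLen p := by omega
  have : Γ.rowLen p < Γ.rowLen p :=
    hcol ▸ mem_iff_lt_rowLen.1 (mem_of_le (Prod.mk_le_mk.2 ⟨by omega, le_rfl⟩) ht')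
  exact this.false

theorem not_obstructed_of_rowArrow_rel {c : ℕ × ℕ} {w : CellPair} (hc : c ∈ Γ)
    (h : Γ.ArrowRel (Γ.rowArrow c) w) : ¬ Γ.Obstructed w := by
  obtain ⟨p, q⟩ := c
  obtain ⟨⟨u, v⟩, ⟨p', q'⟩⟩ := w
  intro hw
  have hp := mem_iff_lt_colLen.1 hc
  have hq := mem_iff_lt_rowLen.1 hc
  have hd := h.displacement_eq
  simp only [displacement, rowArrow, Prod.ext_iff] at hd
  rcases obstructed_iff.1 hw with ⟨rfl, hu, hmem⟩ | ⟨rfl, hv, -⟩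
  · have hcol : Γ.colLen v ≤ u - 1 := not_lt.1 fun h' => hmem (mem_iff_lt_colLen.2 h')
    have hqv : q < v := lt_of_not_ge fun h' => by have := Γ.colLen_anti v q h'; omega
    have := breakCount_lt h.displacement_eq hqv (not_rowsLinked_rowArrow hc)
    exact (h.breakCount_eq ▸ this).false
  · omega

theorem eq_of_rowArrow_rel_rowArrow {c c' : ℕ × ℕ} (hc : c ∈ Γ) (hc' : c' ∈ Γ)
    (h : Γ.ArrowRel (Γ.rowArrow c) (Γ.rowArrow c')) : c = c' := by
  obtain ⟨p, q⟩ := c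
  obtain ⟨p', q'⟩ := c'
  rcases lt_trichotomy q q' with hlt | rfl | hlt
  · have := breakCount_lt h.displacement_eq hlt (not_rowsLinked_rowArrow hc)
    exact (h.breakCount_eq ▸ this).false.elim
  · have hd := h.displacement_eq
    simp only [displacement, rowArrow, Prod.ext_iff] at hd
    simp only [Prod.mk.injEq, and_true]
    omega
  · have := breakCount_lt h.symm.displacement_eq hlt (not_rowsLinked_rowArrow hc')
    exact (h.symm.breakCount_eq ▸ this).false.elim

theorem not_rowArrow_rel_colArrow {c c' : ℕ × ℕ} (hc : c ∈ Γ) (hc' : c' ∈ Γ) :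
    ¬ Γ.ArrowRel (Γ.rowArrow c) (Γ.colArrow c') := by
  intro h
  have hd := h.displacement_eq
  have hp := mem_iff_lt_colLen.1 hc
  have hp' := mem_iff_lt_colLen.1 hc'
  simp only [displacement, rowArrow, colArrow, Prod.ext_iff] at hd
  omega

/-- Step back along `x` until the arrow is obstructed or its source is the first cell after its
column; there, either a `y`-step forward is possible or the target ends its row. -/
theorem exists_obstructed_or_rowArrow {u v p q : ℕ} (hz : Γ.IsArrow ((u, v), (p, q)))
    (hpu : p < u) :
    (∃ w, Γ.ArrowRel ((u, v), (p, q)) w ∧ Γ.Obstructed w) ∨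
      ∃ c ∈ Γ, Γ.ArrowRel ((u, v), (p, q)) (Γ.rowArrow c) := by
  by_cases hprev : (u - 1, v) ∈ Γ
  · have hu : u = Γ.colLen v := by
      have h₁ := mem_iff_lt_colLen.1 hprev
      have h₂ : Γ.colLen v ≤ u := not_lt.1 fun h => hz.1 (mem_iff_lt_colLen.2 h)
      omega
    by_cases hnext : (p, q + 1) ∈ Γ
    · have hstep := arrowStep_y hz.1 hnext
      have : q + 1 < Γ.rowLen 0 := mem_iff_lt_rowLen.1 (mem_of_le (by simp) hnext)
      rcases exists_obstructed_or_rowArrow hstep.isArrow_right hpu with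
        ⟨w, hw, hob⟩ | ⟨c, hc, hrel⟩
      · exact .inl ⟨w, hstep.arrowRel.trans hw, hob⟩
      · exact .inr ⟨c, hc, hstep.arrowRel.trans hrel⟩
    · have hq := mem_iff_lt_rowLen.1 hz.2
      have hq' : Γ.rowLen p ≤ q + 1 := not_lt.1 fun h => hnext (mem_iff_lt_rowLen.2 h)
      refine .inr ⟨(p, v), mem_iff_lt_colLen.2 (hu ▸ hpu), ?_⟩
      rw [rowArrow, ← hu, show Γ.rowLen p - 1 = q by omega]
      exact .refl _
  · obtain ⟨u, rfl⟩ : ∃ u', u = u' + 1 := ⟨u - 1, by omega⟩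
    rcases Nat.eq_zero_or_pos p with rfl | hp
    · exact .inl ⟨_, .refl _, obstructed_iff.2 (.inl ⟨rfl, by omega, hprev⟩)⟩
    · obtain ⟨p, rfl⟩ : ∃ p', p = p' + 1 := ⟨p - 1, by omega⟩
      have hstep := arrowStep_x (by simpa using hprev) hz.2
      rcases exists_obstructed_or_rowArrow hstep.isArrow_left (by omega) with
        ⟨w, hw, hob⟩ | ⟨c, hc, hrel⟩
      · exact .inl ⟨w, hstep.arrowRel.symm.trans hw, hob⟩
      · exact .inr ⟨c, hc, hstep.arrowRel.symm.trans hrel⟩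
termination_by p + (Γ.rowLen 0 - q)

theorem not_obstructed_of_colArrow_rel {c : ℕ × ℕ} {w : CellPair} (hc : c ∈ Γ)
    (h : Γ.ArrowRel (Γ.colArrow c) w) : ¬ Γ.Obstructed w := fun hw =>
  not_obstructed_of_rowArrow_rel (mem_transpose.2 (by simpa using hc))
    (colArrow_transpose c ▸ h.transpose) (obstructed_transpose.2 hw)

theorem eq_of_colArrow_rel_colArrow {c c' : ℕ × ℕ} (hc : c ∈ Γ) (hc' : c' ∈ Γ)
    (h : Γ.ArrowRel (Γ.colArrow c) (Γ.colArrow c')) : c = c' := by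
  have := h.transpose
  rw [colArrow_transpose, colArrow_transpose] at this
  simpa using eq_of_rowArrow_rel_rowArrow (mem_transpose.2 (by simpa using hc))
    (mem_transpose.2 (by simpa using hc')) this

theorem exists_obstructed_or_colArrow {u v p q : ℕ} (hz : Γ.IsArrow ((u, v), (p, q)))
    (hqv : q < v) :
    (∃ w, Γ.ArrowRel ((u, v), (p, q)) w ∧ Γ.Obstructed w) ∨
      ∃ c ∈ Γ, Γ.ArrowRel ((u, v), (p, q)) (Γ.colArrow c) := by
  rcases exists_obstructed_or_rowArrow (Γ := Γ.transpose) (isArrow_transpose.2 hz) hqv with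
    ⟨w, hw, hob⟩ | ⟨c, hc, hrel⟩
  · refine .inl ⟨w.map Prod.swap Prod.swap, arrowRel_transpose.1 ?_, obstructed_transpose.1 ?_⟩
    · simpa [Prod.map_map] using hw
    · simpa [Prod.map_map] using hob
  · refine .inr ⟨c.swap, mem_transpose.1 hc, arrowRel_transpose.1 ?_⟩
    rw [colArrow_transpose]
    simpa using hrel

theorem isArrow_basicArrow (i : Γ.cells ⊕ Γ.cells) : Γ.IsArrow (Γ.basicArrow i) := by
  rcases i with ⟨c, hc⟩ | ⟨c, hc⟩
  exacts [isArrow_rowArrow ((mem_cells c).1 hc), isArrow_colArrow ((mem_cells c).1 hc)]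

theorem not_obstructed_of_basicArrow_rel {i : Γ.cells ⊕ Γ.cells} {w : CellPair}
    (h : Γ.ArrowRel (Γ.basicArrow i) w) : ¬ Γ.Obstructed w := by
  rcases i with ⟨c, hc⟩ | ⟨c, hc⟩
  exacts [not_obstructed_of_rowArrow_rel ((mem_cells c).1 hc) h,
    not_obstructed_of_colArrow_rel ((mem_cells c).1 hc) h]

theorem eq_of_basicArrow_rel_basicArrow {i j : Γ.cells ⊕ Γ.cells}
    (h : Γ.ArrowRel (Γ.basicArrow i) (Γ.basicArrow j)) : i = j := by
  rcases i with ⟨c, hc⟩ | ⟨c, hc⟩ <;> rcases j with ⟨c', hc'⟩ | ⟨c', hc'⟩ <;>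
    rw [mem_cells] at hc hc'
  · simpa using eq_of_rowArrow_rel_rowArrow hc hc' h
  · exact (not_rowArrow_rel_colArrow hc hc' h).elim
  · exact (not_rowArrow_rel_colArrow hc' hc h.symm).elim
  · simpa using eq_of_colArrow_rel_colArrow hc hc' h

theorem exists_obstructed_or_basicArrow {z : CellPair} (hz : Γ.IsArrow z) :
    (∃ w, Γ.ArrowRel z w ∧ Γ.Obstructed w) ∨ ∃ i, Γ.ArrowRel z (Γ.basicArrow i) := by
  obtain ⟨⟨u, v⟩, ⟨p, q⟩⟩ := z
  by_cases hpu : p < u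
  · rcases exists_obstructed_or_rowArrow hz hpu with h | ⟨c, hc, h⟩
    exacts [.inl h, .inr ⟨.inl ⟨c, (mem_cells c).2 hc⟩, h⟩]
  by_cases hqv : q < v
  · rcases exists_obstructed_or_colArrow hz hqv with h | ⟨c, hc, h⟩
    exacts [.inl h, .inr ⟨.inr ⟨c, (mem_cells c).2 hc⟩, h⟩]
  exact (hz.1 (Γ.up_left_mem (not_lt.1 hpu) (not_lt.1 hqv) hz.2)).elim

variable {M : Type*}

variable (Γ) in
/-- The relations satisfied by the coefficients `(s, t) ↦ [x^t] ψ(x^s)` of a homomorphism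
`ψ : I_Γ → R/I_Γ`. -/
structure IsAdmissible [Zero M] (g : CellPair → M) : Prop where
  apply_eq_of_step : ∀ z w, Γ.ArrowStep z w → g z = g w
  apply_eq_zero : ∀ z, Γ.Obstructed z → g z = 0

theorem IsAdmissible.apply_eq_of_rel [Zero M] {g : CellPair → M} (hg : Γ.IsAdmissible g)
    {z w : CellPair} (h : Γ.ArrowRel z w) : g z = g w :=
  Relation.EqvGen.apply_eq_of_rel hg.apply_eq_of_step h

theorem IsAdmissible.apply_eq_zero_of_basicArrow [Zero M] {g : CellPair → M}
    (hg : Γ.IsAdmissible g) (h : ∀ i, g (Γ.basicArrow i) = 0) {z : CellPair}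
    (hz : Γ.IsArrow z) : g z = 0 := by
  rcases exists_obstructed_or_basicArrow hz with ⟨w, hw, hob⟩ | ⟨i, hi⟩
  · rw [hg.apply_eq_of_rel hw, hg.apply_eq_zero w hob]
  · rw [hg.apply_eq_of_rel hi, h i]

open Classical in
theorem exists_isAdmissible_basicArrow [AddCommMonoid M] (h : Γ.cells ⊕ Γ.cells → M) :
    ∃ g : CellPair → M, Γ.IsAdmissible g ∧ ∀ i, g (Γ.basicArrow i) = h i := by
  refine ⟨fun z => ∑ i, if Γ.ArrowRel z (Γ.basicArrow i) then h i else 0,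
    ⟨fun z w hzw => ?_, fun z hz => ?_⟩, fun j => ?_⟩
  · have hiff (i) : Γ.ArrowRel z (Γ.basicArrow i) ↔ Γ.ArrowRel w (Γ.basicArrow i) :=
      ⟨hzw.arrowRel.symm.trans, hzw.arrowRel.trans⟩
    simp only [hiff]
  · exact Finset.sum_eq_zero fun i _ =>
      if_neg fun hi => not_obstructed_of_basicArrow_rel hi.symm hz
  · dsimp only
    rw [Finset.sum_eq_single j
      (fun i _ hij => if_neg fun h => hij (eq_of_basicArrow_rel_basicArrow h).symm)
      (by simp), if_pos (arrowRel_refl _)]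

end YoungDiagram

/-! ### Homomorphisms `I_Γ → R/I_Γ` -/

def cellExp (c : ℕ × ℕ) : Fin 2 →₀ ℕ := Finsupp.single 0 c.1 + Finsupp.single 1 c.2

@[simp] theorem cellExp_apply_zero (c : ℕ × ℕ) : cellExp c 0 = c.1 := by simp [cellExp]

@[simp] theorem cellExp_apply_one (c : ℕ × ℕ) : cellExp c 1 = c.2 := by simp [cellExp]

theorem cellExp_injective : Function.Injective cellExp := fun c c' h =>
  Prod.ext (by simpa using DFunLike.congr_fun h 0) (by simpa using DFunLike.congr_fun h 1)

theorem cellExp_apply_pair (m : Fin 2 →₀ ℕ) : cellExp (m 0, m 1) = m := by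
  ext i
  fin_cases i <;> simp

theorem cellExp_add (c c' : ℕ × ℕ) : cellExp (c + c') = cellExp c + cellExp c' := by
  ext i
  fin_cases i <;> simp

theorem cellExp_cellUnit (i : Fin 2) : cellExp (cellUnit i) = Finsupp.single i 1 := by
  ext j
  fin_cases i <;> fin_cases j <;> simp [cellUnit]

theorem mem_support_cellExp {i : Fin 2} {c : ℕ × ℕ} :
    i ∈ (cellExp c).support ↔ cellUnit i ≤ c := by
  fin_cases i <;> simp [cellUnit, Prod.le_def, Nat.one_le_iff_ne_zero]

def cellMonomial (c : ℕ × ℕ) : Rxy := monomial (cellExp c) 1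

theorem cellMonomial_eq (c : ℕ × ℕ) : cellMonomial c = X 0 ^ c.1 * X 1 ^ c.2 := by
  rw [cellMonomial, cellExp, X_pow_eq_monomial, X_pow_eq_monomial, monomial_mul, one_mul]

theorem X_mul_cellMonomial (i : Fin 2) (c : ℕ × ℕ) :
    X i * cellMonomial c = cellMonomial (c + cellUnit i) := by
  rw [cellMonomial, cellMonomial, cellExp_add, cellExp_cellUnit, X, monomial_mul, one_mul,
    add_comm]

variable {Γ : YoungDiagram}

theorem mem_monomialIdeal_iff {f : Rxy} :
    f ∈ monomialIdeal Γ ↔ ∀ m ∈ f.support, (m 0, m 1) ∉ Γ := by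
  have hspan : monomialIdeal Γ =
      Ideal.span ((fun m => monomial m (1 : ℂ)) '' {m | (m 0, m 1) ∉ Γ}) := by
    rw [monomialIdeal]
    congr 1
    ext f
    constructor
    · rintro ⟨u, v, huv, rfl⟩
      exact ⟨cellExp (u, v), by simpa using huv, cellMonomial_eq (u, v)⟩
    · rintro ⟨m, hm, rfl⟩
      refine ⟨m 0, m 1, hm, ?_⟩
      rw [← cellMonomial_eq (m 0, m 1), cellMonomial, cellExp_apply_pair]
  rw [hspan, mem_ideal_span_monomial_image]
  exact forall₂_congr fun m _ =>
    ⟨fun ⟨s, hs, hsm⟩ hm => hs (Γ.up_left_mem (hsm 0) (hsm 1) hm),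
      fun hm => ⟨m, hm, le_rfl⟩⟩

theorem cellMonomial_mem_monomialIdeal {c : ℕ × ℕ} (hc : c ∉ Γ) :
    cellMonomial c ∈ monomialIdeal Γ :=
  Ideal.subset_span ⟨c.1, c.2, hc, cellMonomial_eq c⟩

theorem mem_monomialIdeal_iff_coeff {f : Rxy} :
    f ∈ monomialIdeal Γ ↔ ∀ c ∈ Γ, coeff (cellExp c) f = 0 := by
  rw [mem_monomialIdeal_iff]
  refine ⟨fun h c hc => notMem_support_iff.1 fun hf => h _ hf (by simpa using hc),
    fun h m hm hmΓ => mem_support_iff.1 hm ?_⟩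
  simpa [cellExp_apply_pair] using h _ hmΓ

variable (Γ) in
/-- The coefficient of `x^c` in `R/I_Γ`, whose monomials `x^c` with `c ∈ Γ` form a basis; zero
for `c ∉ Γ`. -/
def quotCoeff (c : ℕ × ℕ) : Rxy ⧸ monomialIdeal Γ →ₗ[ℂ] ℂ :=
  (((monomialIdeal Γ).restrictScalars ℂ).liftQ
      (if c ∈ Γ then lcoeff ℂ (cellExp c) else 0) fun f hf => by
        split_ifs with hc
        · exact mem_monomialIdeal_iff_coeff.1 hf c hc
        · rfl).comp
    (Submodule.Quotient.restrictScalarsEquiv ℂ (monomialIdeal Γ)).symm.toLinearMap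

theorem quotCoeff_mk (c : ℕ × ℕ) (f : Rxy) :
    quotCoeff Γ c (Ideal.Quotient.mk _ f) = if c ∈ Γ then coeff (cellExp c) f else 0 := by
  rw [quotCoeff]
  split_ifs <;> rfl

theorem quotCoeff_mk_cellMonomial {c : ℕ × ℕ} (hc : c ∈ Γ) (t : ℕ × ℕ) :
    quotCoeff Γ c (Ideal.Quotient.mk _ (cellMonomial t)) = if t = c then 1 else 0 := by
  simp [quotCoeff_mk, hc, cellMonomial, coeff_monomial, cellExp_injective.eq_iff]

theorem quotCoeff_ext {y y' : Rxy ⧸ monomialIdeal Γ}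
    (h : ∀ c ∈ Γ, quotCoeff Γ c y = quotCoeff Γ c y') : y = y' := by
  obtain ⟨f, rfl⟩ := Ideal.Quotient.mk_surjective y
  obtain ⟨f', rfl⟩ := Ideal.Quotient.mk_surjective y'
  refine Ideal.Quotient.eq.2 (mem_monomialIdeal_iff_coeff.2 fun c hc => ?_)
  simpa [quotCoeff_mk, hc, sub_eq_zero] using h c hc

theorem quotCoeff_X_smul_of_not_le {i : Fin 2} {c : ℕ × ℕ} (hc : ¬ cellUnit i ≤ c)
    (y : Rxy ⧸ monomialIdeal Γ) : quotCoeff Γ c ((X i : Rxy) • y) = 0 := by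
  obtain ⟨f, rfl⟩ := Ideal.Quotient.mk_surjective y
  change quotCoeff Γ c (Ideal.Quotient.mk _ (X i * f)) = 0
  rw [quotCoeff_mk, coeff_X_mul', if_neg (mt mem_support_cellExp.1 hc), ite_self]

theorem quotCoeff_X_smul {i : Fin 2} {c : ℕ × ℕ} (hc : c + cellUnit i ∈ Γ)
    (y : Rxy ⧸ monomialIdeal Γ) :
    quotCoeff Γ (c + cellUnit i) ((X i : Rxy) • y) = quotCoeff Γ c y := by
  obtain ⟨f, rfl⟩ := Ideal.Quotient.mk_surjective y
  change quotCoeff Γ _ (Ideal.Quotient.mk _ (X i * f)) = _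
  rw [quotCoeff_mk, quotCoeff_mk, if_pos hc,
    if_pos (YoungDiagram.mem_of_le le_self_add hc), cellExp_add, cellExp_cellUnit, add_comm,
    coeff_X_mul]

variable (Γ) in
/-- `ψ ↦ [x^t] ψ(x^s)` for `z = (s, t)`, and zero when `s ∈ Γ`. -/
def arrowCoeff (z : CellPair) :
    (monomialIdeal Γ →ₗ[Rxy] Rxy ⧸ monomialIdeal Γ) →ₗ[ℂ] ℂ :=
  if h : z.1 ∈ Γ then 0 else
    quotCoeff Γ z.2 ∘ₗ
      LinearMap.applyₗ' ℂ ⟨cellMonomial z.1, cellMonomial_mem_monomialIdeal h⟩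

theorem arrowCoeff_apply {s : ℕ × ℕ} (hs : s ∉ Γ) (t : ℕ × ℕ)
    (ψ : monomialIdeal Γ →ₗ[Rxy] Rxy ⧸ monomialIdeal Γ) :
    arrowCoeff Γ (s, t) ψ =
      quotCoeff Γ t (ψ ⟨cellMonomial s, cellMonomial_mem_monomialIdeal hs⟩) := by
  simp [arrowCoeff, hs]

theorem cellMonomial_add_cellUnit_eq_X_smul {s : ℕ × ℕ} (i : Fin 2) (hs : s ∉ Γ) :
    (⟨cellMonomial (s + cellUnit i), cellMonomial_mem_monomialIdeal
        fun h => hs (YoungDiagram.mem_of_le le_self_add h)⟩ : monomialIdeal Γ) =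
      (X i : Rxy) • ⟨cellMonomial s, cellMonomial_mem_monomialIdeal hs⟩ :=
  Subtype.ext (X_mul_cellMonomial i s).symm

theorem isAdmissible_arrowCoeff (ψ : monomialIdeal Γ →ₗ[Rxy] Rxy ⧸ monomialIdeal Γ) :
    Γ.IsAdmissible fun z => arrowCoeff Γ z ψ := by
  refine ⟨fun ⟨s, t⟩ _ ⟨hs, ht, i, hw⟩ => ?_,
    fun ⟨s, t⟩ ⟨i, hle, hprev, ht⟩ => ?_⟩
  · subst hw
    have hs' : s + cellUnit i ∉ Γ := fun h => hs (YoungDiagram.mem_of_le le_self_add h)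
    simp only [Prod.mk_add_mk] at ht ⊢
    rw [arrowCoeff_apply hs, arrowCoeff_apply hs', cellMonomial_add_cellUnit_eq_X_smul i hs,
      map_smul, quotCoeff_X_smul ht]
  · obtain ⟨s, rfl⟩ : ∃ s', s = s' + cellUnit i :=
      ⟨s - cellUnit i, (tsub_add_cancel_of_le hle).symm⟩
    simp only [add_tsub_cancel_right] at hprev
    rw [arrowCoeff_apply fun h => hprev (YoungDiagram.mem_of_le le_self_add h),
      cellMonomial_add_cellUnit_eq_X_smul i hprev, map_smul, quotCoeff_X_smul_of_not_le ht]

theorem eq_zero_of_arrowCoeff {ψ : monomialIdeal Γ →ₗ[Rxy] Rxy ⧸ monomialIdeal Γ}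
    (h : ∀ z, Γ.IsArrow z → arrowCoeff Γ z ψ = 0) : ψ = 0 := by
  refine LinearMap.ext_on Submodule.span_span_coe_preimage ?_
  rintro ⟨_, hf⟩ ⟨u, v, huv, rfl⟩
  refine quotCoeff_ext fun c hc => ?_
  have := h ((u, v), c) ⟨huv, hc⟩
  rw [arrowCoeff_apply huv] at this
  simpa [cellMonomial_eq] using this

variable (Γ) in
def liftCoeffs (g : CellPair → ℂ) : Rxy →ₗ[ℂ] Rxy ⧸ monomialIdeal Γ :=
  (basisMonomials (Fin 2) ℂ).constr ℂ fun m =>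
    ∑ t ∈ Γ.cells, g ((m 0, m 1), t) • Ideal.Quotient.mk _ (cellMonomial t)

theorem quotCoeff_liftCoeffs_cellMonomial (g : CellPair → ℂ) (s : ℕ × ℕ) {c : ℕ × ℕ}
    (hc : c ∈ Γ) : quotCoeff Γ c (liftCoeffs Γ g (cellMonomial s)) = g (s, c) := by
  have hbasis : cellMonomial s = basisMonomials (Fin 2) ℂ (cellExp s) := by
    rw [coe_basisMonomials, cellMonomial]
  rw [hbasis, liftCoeffs, Module.Basis.constr_basis, map_sum,
    Finset.sum_eq_single c (fun t _ htc => by simp [quotCoeff_mk_cellMonomial hc, htc])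
      (fun h => (h ((YoungDiagram.mem_cells c).2 hc)).elim)]
  simp [quotCoeff_mk_cellMonomial hc]

theorem liftCoeffs_X_mul_cellMonomial {g : CellPair → ℂ} (hg : Γ.IsAdmissible g) (i : Fin 2)
    {s : ℕ × ℕ} (hs : s ∉ Γ) :
    liftCoeffs Γ g (X i * cellMonomial s) = (X i : Rxy) • liftCoeffs Γ g (cellMonomial s) := by
  refine quotCoeff_ext fun c hc => ?_
  rw [X_mul_cellMonomial, quotCoeff_liftCoeffs_cellMonomial _ _ hc]
  by_cases hic : cellUnit i ≤ c
  · obtain ⟨c, rfl⟩ : ∃ c', c = c' + cellUnit i :=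
      ⟨c - cellUnit i, (tsub_add_cancel_of_le hic).symm⟩
    rw [quotCoeff_X_smul hc,
      quotCoeff_liftCoeffs_cellMonomial _ _ (YoungDiagram.mem_of_le le_self_add hc)]
    exact (hg.apply_eq_of_step (s, c) _ ⟨hs, hc, i, rfl⟩).symm
  · rw [quotCoeff_X_smul_of_not_le hic]
    exact hg.apply_eq_zero _ ⟨i, le_add_self, by simpa using hs, hic⟩

theorem liftCoeffs_X_mul {g : CellPair → ℂ} (hg : Γ.IsAdmissible g) (i : Fin 2) {f : Rxy}
    (hf : f ∈ monomialIdeal Γ) :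
    liftCoeffs Γ g (X i * f) = (X i : Rxy) • liftCoeffs Γ g f := by
  rw [f.as_sum, Finset.mul_sum, map_sum, map_sum, Finset.smul_sum]
  refine Finset.sum_congr rfl fun m hm => ?_
  have hmono : monomial m (coeff m f) = coeff m f • cellMonomial (m 0, m 1) := by
    rw [cellMonomial, cellExp_apply_pair, smul_monomial, smul_eq_mul, mul_one]
  rw [hmono, mul_smul_comm, map_smul, map_smul,
    liftCoeffs_X_mul_cellMonomial hg i (mem_monomialIdeal_iff.1 hf m hm), smul_comm]

theorem liftCoeffs_mul {g : CellPair → ℂ} (hg : Γ.IsAdmissible g) (r : Rxy) {f : Rxy}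
    (hf : f ∈ monomialIdeal Γ) : liftCoeffs Γ g (r * f) = r • liftCoeffs Γ g f := by
  induction r using MvPolynomial.induction_on generalizing f with
  | C a => rw [← smul_eq_C_mul, map_smul, ← algebraMap_smul Rxy a, algebraMap_eq]
  | add p q hp hq => rw [add_mul, map_add, hp hf, hq hf, add_smul]
  | mul_X p i hp =>
    rw [mul_assoc, hp (Ideal.mul_mem_left _ _ hf), liftCoeffs_X_mul hg i hf, smul_smul]

theorem exists_arrowCoeff_eq {g : CellPair → ℂ} (hg : Γ.IsAdmissible g) :
    ∃ ψ : monomialIdeal Γ →ₗ[Rxy] Rxy ⧸ monomialIdeal Γ,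
      ∀ z, Γ.IsArrow z → arrowCoeff Γ z ψ = g z := by
  refine ⟨⟨⟨fun f => liftCoeffs Γ g f, fun f f' => map_add _ _ _⟩,
    fun r f => liftCoeffs_mul hg r f.2⟩, fun ⟨s, t⟩ hz => ?_⟩
  rw [arrowCoeff_apply hz.1]
  exact quotCoeff_liftCoeffs_cellMonomial g s hz.2

variable (Γ) in
def basicArrowCoeffs :
    (monomialIdeal Γ →ₗ[Rxy] Rxy ⧸ monomialIdeal Γ) →ₗ[ℂ]
      (Γ.cells ⊕ Γ.cells → ℂ) :=
  LinearMap.pi fun i => arrowCoeff Γ (Γ.basicArrow i)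

theorem bijective_basicArrowCoeffs : Function.Bijective (basicArrowCoeffs Γ) := by
  refine ⟨(injective_iff_map_eq_zero _).2 fun ψ hψ => ?_, fun h => ?_⟩
  · exact eq_zero_of_arrowCoeff fun z hz =>
      (isAdmissible_arrowCoeff ψ).apply_eq_zero_of_basicArrow (fun i => congr_fun hψ i) hz
  · obtain ⟨g, hg, hgh⟩ := YoungDiagram.exists_isAdmissible_basicArrow h
    obtain ⟨ψ, hψ⟩ := exists_arrowCoeff_eq hg
    exact ⟨ψ, funext fun i => (hψ _ (YoungDiagram.isArrow_basicArrow i)).trans (hgh i)⟩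

/-- If `Γ` has `n` boxes then `dim_ℂ Hom_R(I_Γ, R/I_Γ) = 2n`. -/
theorem statement9 (n : ℕ) (Γ : YoungDiagram) (hΓ : Γ.card = n) :
    Module.rank ℂ (monomialIdeal Γ →ₗ[Rxy] Rxy ⧸ monomialIdeal Γ)
      = ((2 * n : ℕ) : Cardinal) := by
  rw [(LinearEquiv.ofBijective _ bijective_basicArrowCoeffs).rank_eq, rank_fun',
    Fintype.card_sum, Fintype.card_coe, ← hΓ, two_mul]
end
end

section
/- For every n ≥ 0, ∑_{Y ⊢ n+1} d(Y) · q^{(n+1)−ℓ(Y)} = ∑_ν q^{n−ℓ(ν)} as polynomials in q, where the left-hand sum runs over all Young diagrams Y with n+1 boxes and the right-hand sum runs over all partitions ν with |ν| ≤ n. Equivalently, since pairs (Γ₁,Γ₂) of nested Young diagrams with n and n+1 boxes correspond to pairs (Γ₂, removable box of Γ₂), this says ∑_{(Γ₁,Γ₂)⊢[n,n+1]} q^{(n+1)−ℓ(Γ₂)} equals the coefficient of z^n in (1/(1−zq))·∏_{k≥1} 1/(1−z^k q^{k−1}); this is the generating function identity for the Poincaré polynomials of Hilb^{n,n+1}(0).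 -/
/-!
Statement 16: Σ_{Y ⊢ n+1} d(Y)·q^{(n+1)−ℓ(Y)} = Σ_{|ν| ≤ n} q^{n−ℓ(ν)}, where d(Y) is
the number of removable boxes of Y; this is the generating function identity for the
Poincaré polynomials of Hilb^{n,n+1}(0).
-/

open Polynomial

/-- The number of removable boxes of a Young diagram: the boxes whose removal leaves a
Young diagram. -/
noncomputable def removableCount (Y : YoungDiagram) : ℕ :=
  Set.ncard {c : ℕ × ℕ | c ∈ Y ∧ IsLowerSet (↑(Y.cells.erase c) : Set (ℕ × ℕ))}

/-!
A box is removable exactly when it is a maximal cell of the diagram, i.e. a corner `(i, j)` with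
`i + 1 = colLen j` and `j + 1 = rowLen i`; sending a corner to the length of its row shows that
`d(Y)` is the number of distinct row lengths of `Y`. Reading `Y` as the partition `p` of `n + 1`
given by its row lengths (so `ℓ(Y)` is the number of parts), the left side becomes a sum over
pairs `(p, a)` with `a` one of the distinct parts of `p`. Deleting one copy of `a` is a bijection
from these pairs onto the partitions `ν` of the numbers `m ≤ n` (with `a = n + 1 - m`), and since
`ν` has one part fewer than `p`, the exponents match.
-/

theorem IsLowerSet.isLowerSet_diff_singleton_iff {α : Type*} [PartialOrder α] {s : Set α}
    (hs : IsLowerSet s) {a : α} (ha : a ∈ s) :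
    IsLowerSet (s \ {a}) ↔ Maximal (· ∈ s) a := by
  refine ⟨fun h => ⟨ha, fun b hb hab => ?_⟩, fun h => hs.erase fun b hb hab => ?_⟩
  · by_contra hba
    exact (h hab ⟨hb, fun hb' => hba hb'.le⟩).2 rfl
  · exact le_antisymm (h.2 hb hab) hab

namespace YoungDiagram

variable (μ : YoungDiagram)

theorem card_eq_sum_rowLens : μ.card = μ.rowLens.sum := by
  have hrow : ∀ i ∈ Finset.range (μ.colLen 0), (μ.cells.filter (·.1 = i)).card = μ.rowLen i :=
    fun i _ => (μ.rowLen_eq_card).symm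
  rw [YoungDiagram.card, Finset.card_eq_sum_card_fiberwise (f := Prod.fst)
    (t := Finset.range (μ.colLen 0)), Finset.sum_congr rfl hrow]
  · rfl
  · intro c hc
    simpa [← mem_iff_lt_colLen] using μ.up_left_mem le_rfl (Nat.zero_le _) hc

theorem maximal_mem_iff {i j : ℕ} :
    Maximal (· ∈ μ) (i, j) ↔ i + 1 = μ.colLen j ∧ j + 1 = μ.rowLen i := by
  have hcorner : Maximal (· ∈ μ) (i, j) ↔ (i, j) ∈ μ ∧ (i + 1, j) ∉ μ ∧ (i, j + 1) ∉ μ := by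
    refine ⟨fun h => ⟨h.1, fun hd => ?_, fun hr => ?_⟩, fun ⟨hc, hd, hr⟩ => ⟨hc, ?_⟩⟩
    · simpa using h.2 hd (by simp)
    · simpa using h.2 hr (by simp)
    · rintro ⟨k, l⟩ hkl ⟨hik, hjl⟩
      rcases hik.lt_or_eq with hik | rfl
      · exact absurd (μ.up_left_mem hik hjl hkl) hd
      rcases hjl.lt_or_eq with hjl | rfl
      · exact absurd (μ.up_left_mem le_rfl hjl hkl) hr
      · exact le_rfl
  rw [hcorner, mem_iff_lt_colLen (i := i + 1), mem_iff_lt_rowLen (j := j + 1)]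
  constructor
  · rintro ⟨hc, hd, hr⟩
    have := mem_iff_lt_colLen.mp hc
    have := mem_iff_lt_rowLen.mp hc
    omega
  · rintro ⟨hd, hr⟩
    exact ⟨mem_iff_lt_rowLen.mpr (by omega), by omega, by omega⟩

theorem mem_rowLens {v : ℕ} : v ∈ μ.rowLens ↔ ∃ i < μ.colLen 0, μ.rowLen i = v := by
  simp [rowLens]

theorem removableCount_eq_card_toFinset_rowLens :
    removableCount μ = μ.rowLens.toFinset.card := by
  have hremovable : {c : ℕ × ℕ | c ∈ μ ∧ IsLowerSet (↑(μ.cells.erase c) : Set (ℕ × ℕ))}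
      = {c | c.1 + 1 = μ.colLen c.2 ∧ c.2 + 1 = μ.rowLen c.1} := by
    ext c
    rw [Set.mem_ofPred_eq, Set.mem_ofPred_eq, ← maximal_mem_iff, Finset.coe_erase]
    exact ⟨fun ⟨hc, h⟩ => (μ.isLowerSet.isLowerSet_diff_singleton_iff hc).mp h,
      fun h => ⟨h.1, (μ.isLowerSet.isLowerSet_diff_singleton_iff h.1).mpr h⟩⟩
  -- the corner at the end of a row of length `v` is the bottom cell of column `v - 1`
  have hinv : Set.InvOn (fun v => (μ.colLen (v - 1) - 1, v - 1)) (fun c : ℕ × ℕ => c.2 + 1)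
      {c | c.1 + 1 = μ.colLen c.2 ∧ c.2 + 1 = μ.rowLen c.1} {v | v ∈ μ.rowLens} := by
    refine ⟨fun ⟨i, j⟩ ⟨hcol, _⟩ => ?_, fun v hv => ?_⟩
    · dsimp only at hcol ⊢
      rw [Nat.add_sub_cancel, ← hcol, Nat.add_sub_cancel]
    · have := μ.pos_of_mem_rowLens v hv
      simp only
      omega
  rw [removableCount, hremovable, (hinv.bijOn ?_ ?_).ncard_eq, ← List.coe_toFinset,
    Set.ncard_coe_finset]
  · rintro ⟨i, j⟩ ⟨hcol, hrow⟩
    dsimp only at hcol hrow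
    exact μ.mem_rowLens.mpr ⟨i, by have := μ.colLen_anti 0 j (Nat.zero_le _); omega, hrow.symm⟩
  · intro v hv
    obtain ⟨i, hi, rfl⟩ := μ.mem_rowLens.mp hv
    have hbottom : i < μ.colLen (μ.rowLen i - 1) := by
      rw [← mem_iff_lt_colLen, mem_iff_lt_rowLen]
      have := mem_iff_lt_rowLen.mp (mem_iff_lt_colLen.mpr hi)
      omega
    have hlast : μ.rowLen i - 1 < μ.rowLen (μ.colLen (μ.rowLen i - 1) - 1) :=
      mem_iff_lt_rowLen.mp (mem_iff_lt_colLen.mpr (by omega))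
    have := μ.rowLen_anti i (μ.colLen (μ.rowLen i - 1) - 1) (by omega)
    exact ⟨by dsimp only; omega, by dsimp only; omega⟩

theorem rowLens_injective : Function.Injective rowLens :=
  fun _ _ h => equivListRowLens.injective (Subtype.ext h)

noncomputable def equivPartition (k : ℕ) : {μ : YoungDiagram // μ.card = k} ≃ k.Partition where
  toFun μ := ⟨μ.1.rowLens, μ.1.pos_of_mem_rowLens _, by
    rw [Multiset.sum_coe, ← card_eq_sum_rowLens, μ.2]⟩
  invFun p := ⟨ofRowLens (p.parts.sort (· ≥ ·)) (Multiset.pairwise_sort _ _).sortedGE, by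
    rw [card_eq_sum_rowLens, rowLens_ofRowLens_eq_self fun v hv => p.parts_pos
      ((Multiset.mem_sort _).mp hv), ← Multiset.sum_coe, Multiset.sort_eq, p.parts_sum]⟩
  left_inv μ := by
    refine Subtype.ext (rowLens_injective ?_)
    rw [rowLens_ofRowLens_eq_self fun v hv =>
      μ.1.pos_of_mem_rowLens v ((Multiset.mem_sort _).mp hv)]
    exact (Multiset.coe_eq_coe.mp (Multiset.sort_eq _ _)).eq_of_sortedGE
      (Multiset.pairwise_sort _ _).sortedGE μ.1.rowLens_sorted
  right_inv p := Nat.Partition.ext <| by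
    simp [rowLens_ofRowLens_eq_self fun v hv => p.parts_pos ((Multiset.mem_sort _).mp hv)]

theorem coe_rowLens_equivPartition_symm {k : ℕ} (p : k.Partition) :
    (((equivPartition k).symm p).1.rowLens : Multiset ℕ) = p.parts :=
  congrArg Nat.Partition.parts ((equivPartition k).apply_symm_apply p)

theorem ell_eq_length_rowLens : ell μ = μ.rowLens.length := by
  rw [length_rowLens, colLen_eq_card]
  rfl

end YoungDiagram

theorem Nat.Partition.sum_sum_erase_eq_sum_range {M : Type*} [AddCommMonoid M] (N : ℕ) (f : Multiset ℕ → M) :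
    ∑ p : N.Partition, ∑ a ∈ p.parts.toFinset, f (p.parts.erase a)
      = ∑ m ∈ Finset.range N, ∑ ν : m.Partition, f ν.parts := by
  classical
  have hswap : ∑ p : N.Partition, ∑ a ∈ p.parts.toFinset, f (p.parts.erase a)
      = ∑ a ∈ Finset.Icc 1 N, ∑ p : N.Partition with a ∈ p.parts, f (p.parts.erase a) := by
    refine Finset.sum_comm' fun p a => ?_
    simp only [Finset.mem_univ, true_and, Multiset.mem_toFinset, Finset.mem_filter, Finset.mem_Icc]
    exact ⟨fun h => ⟨h, p.parts_pos h, Nat.Partition.le_of_mem_parts h⟩, And.left⟩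
  have hremove : ∀ a ∈ Finset.Icc 1 N, ∑ p : N.Partition with a ∈ p.parts, f (p.parts.erase a)
      = ∑ ν : (N - a).Partition, f ν.parts := by
    intro a ha
    obtain ⟨ha1, haN⟩ := Finset.mem_Icc.mp ha
    rw [Finset.sum_subtype (p := (a ∈ ·.parts)) _ (fun p => by simp)]
    exact Fintype.sum_equiv (Nat.Partition.partitionWithPartEquiv ha1 haN) _ _ (fun p => by simp)
  rw [hswap, Finset.sum_congr rfl hremove]
  refine Finset.sum_nbij' (N - ·) (N - ·) ?_ ?_ ?_ ?_ (fun _ _ => rfl)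
  all_goals
    intro x hx
    simp only [Finset.mem_Icc, Finset.mem_range] at hx ⊢
    omega

/-- `Σ_{Y ⊢ n+1} d(Y)·q^{(n+1)−ℓ(Y)} = Σ_{ν, |ν| ≤ n} q^{n−ℓ(ν)}`. -/
theorem statement16 (n : ℕ) :
    (∑ᶠ Y : {Y : YoungDiagram // Y.card = n + 1},
        (removableCount Y.1 : Polynomial ℤ) * (X : Polynomial ℤ) ^ ((n + 1) - ell Y.1))
      = ∑ m ∈ Finset.range (n + 1),
          ∑ ν : Nat.Partition m, (X : Polynomial ℤ) ^ (n - ν.parts.card) := by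
  rw [← finsum_comp_equiv (YoungDiagram.equivPartition (n + 1)).symm, finsum_eq_sum_of_fintype,
    ← Nat.Partition.sum_sum_erase_eq_sum_range (n + 1) fun s => X ^ (n - Multiset.card s)]
  refine Finset.sum_congr rfl fun p _ => ?_
  rw [YoungDiagram.removableCount_eq_card_toFinset_rowLens, YoungDiagram.ell_eq_length_rowLens,
    ← List.toFinset_coe, ← Multiset.coe_card, YoungDiagram.coe_rowLens_equivPartition_symm,
    ← nsmul_eq_mul, ← Finset.sum_const]
  refine Finset.sum_congr rfl fun a ha => ?_
  have hcard := Multiset.card_erase_add_one (Multiset.mem_toFinset.mp ha)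
  rw [show n + 1 - p.parts.card = n - (p.parts.erase a).card by omega]
end
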